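/- arXiv:1408.1870 — 2 statements merged into one kernel-verified Lean document; each statement's English description precedes it below -/
import Mathlib

section
/- Let n ≥ 3 be odd and let x_i = cos((2i−1)π/(2n)) for i = 1, …, n be the Chebyshev knots of the first kind, with Hermite–Fejér fundamental polynomials h_i(x) = (1/n²)·(T_n(x)/(x − x_i))²·(1 − x·x_i) (the quotient T_n(x)/(x − x_i) being a polynomial since T_n(x_i) = 0). Then for every i ≠ (n+1)/2, the second derivative at 0 satisfies h_i''(0) = 2/x_i². -/
/-!
Let `r = xᵢ` and `q = Tₙ /ₘ (X - r)`, so that `Tₙ = (X - r) q`. Because `n` is odd, `Tₙ(0) = 0`,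
and `r ≠ 0` for `i ≠ (n+1)/2`, so `q(0) = 0`. Hence in `hᵢ = n⁻² q² (1 - X r)` only the term
`2 q'(0)²` survives in `hᵢ''(0)`, i.e. `hᵢ''(0) = 2 q'(0)² / n²`. Differentiating `Tₙ = (X - r) q` at
`0` gives `Tₙ'(0) = -r q'(0)`, while `Tₙ'(0) = n Uₙ₋₁(0) = ±n`; thus `q'(0)² = n² / r²`.
-/

open Polynomial Real

theorem Polynomial.iteratedDeriv_eval {𝕜 : Type*} [NontriviallyNormedField 𝕜] (p : 𝕜[X]) (k : ℕ) :
    iteratedDeriv k (fun x => p.eval x) = fun x => (derivative^[k] p).eval x := by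
  induction k generalizing p with
  | zero => simp
  | succ k ih =>
    have hderiv : _root_.deriv (fun x => p.eval x) = fun x => (derivative p).eval x := by
      ext
      exact p.deriv
    rw [iteratedDeriv_succ', hderiv, ih, Function.iterate_succ_apply]

namespace Polynomial

variable {R : Type*} [CommRing R] {p q : R[X]} {r a : R}

theorem eval_iterate_derivative_two_sq_mul_of_isRoot (hq : q.IsRoot a) (s : R[X]) :
    (derivative^[2] (q ^ 2 * s)).eval a = 2 * (derivative q).eval a ^ 2 * s.eval a := by
  simp [derivative_mul, derivative_pow, hq.eq_zero]
  ring

theorem isRoot_divByMonic_X_sub_C [NoZeroDivisors R] (hr : p.IsRoot r) (ha : p.IsRoot a)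
    (hne : a ≠ r) : (p /ₘ (X - C r)).IsRoot a := by
  have hfac := congrArg (eval a) (mul_divByMonic_eq_iff_isRoot.mpr hr)
  rw [eval_mul, ha.eq_zero, eval_sub, eval_X, eval_C] at hfac
  exact (mul_eq_zero.mp hfac).resolve_left (sub_ne_zero.mpr hne)

theorem eval_derivative_of_isRoot_divByMonic_X_sub_C (hr : p.IsRoot r)
    (ha : (p /ₘ (X - C r)).IsRoot a) :
    (derivative p).eval a = (a - r) * (derivative (p /ₘ (X - C r))).eval a := by
  conv_lhs => rw [← mul_divByMonic_eq_iff_isRoot.mpr hr]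
  simp [ha.eq_zero]

namespace Chebyshev

theorem eval_derivative_T_zero_sq_of_odd {n : ℤ} (hn : Odd n) :
    (derivative (T R n)).eval 0 ^ 2 = (n : R) ^ 2 := by
  rw [T_derivative_eq_U, eval_mul, eval_intCast, U_eval_zero_of_even (R := R) (hn.sub_odd odd_one)]
  rcases Int.units_eq_one_or ((n - 1) / 2).negOnePow with h | h <;> simp [h]

end Chebyshev

end Polynomial

noncomputable def chebyshevKnot (n i : ℕ) : ℝ :=
  cos ((2 * i - 1) * π / (2 * n))

theorem isRoot_T_chebyshevKnot {n : ℕ} (hn : n ≠ 0) (i : ℕ) :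
    (Chebyshev.T ℝ n).IsRoot (chebyshevKnot n i) := by
  rw [IsRoot, chebyshevKnot, Chebyshev.T_real_cos, cos_eq_zero_iff]
  use (i : ℤ) - 1
  push_cast
  field_simp
  ring

theorem chebyshevKnot_ne_zero {n i : ℕ} (hi : 1 ≤ i) (hin : i ≤ n) (hmid : 2 * i ≠ n + 1) :
    chebyshevKnot n i ≠ 0 := by
  have hn : (0 : ℝ) < n := by norm_cast; omega
  have hi' : (1 : ℝ) ≤ i := by exact_mod_cast hi
  have hin' : (i : ℝ) ≤ n := by exact_mod_cast hin
  have hangle_mem : (2 * i - 1) * π / (2 * n) ∈ Set.Icc 0 π := by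
    constructor
    · exact div_nonneg (mul_nonneg (by linarith) pi_pos.le) (by positivity)
    · rw [div_le_iff₀ (by positivity)]
      nlinarith [pi_pos]
  intro hcos
  have hangle : (2 * i - 1) * π / (2 * n) = π / 2 :=
    injOn_cos hangle_mem ⟨by positivity, by linarith [pi_pos]⟩ (hcos.trans cos_pi_div_two.symm)
  field_simp at hangle
  exact hmid (by exact_mod_cast (by linarith [pi_pos] : (2 * i : ℝ) = n + 1))

open Polynomial.Chebyshev in
theorem hermiteFejer_chebyshev_secondDeriv_at_zero_general (n : ℕ) (hodd : Odd n)
    (x : ℕ → ℝ)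
    (hx : ∀ i, 1 ≤ i → i ≤ n → x i = Real.cos ((2 * (i : ℝ) - 1) * Real.pi / (2 * n)))
    (h : ℕ → ℝ → ℝ)
    (hh : ∀ i t, h i t = (1 / (n : ℝ) ^ 2)
      * ((Polynomial.Chebyshev.T ℝ n /ₘ (X - C (x i))).eval t) ^ 2 * (1 - t * x i)) :
    ∀ i, 1 ≤ i → i ≤ n → i ≠ (n + 1) / 2 →
      iteratedDeriv 2 (h i) 0 = 2 / (x i) ^ 2 := by
  intro i hi hin hmid
  have hoddℤ : Odd (n : ℤ) := (Int.odd_coe_nat n).mpr hodd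
  have hroot : (T ℝ n).IsRoot (x i) := hx i hi hin ▸ isRoot_T_chebyshevKnot hodd.pos.ne' i
  have hr : x i ≠ 0 := by
    rw [hx i hi hin]
    exact chebyshevKnot_ne_zero hi hin (by obtain ⟨m, rfl⟩ := hodd; omega)
  set q := T ℝ n /ₘ (X - C (x i))
  have hq : q.IsRoot 0 :=
    isRoot_divByMonic_X_sub_C hroot (T_eval_zero_of_odd (R := ℝ) hoddℤ) hr.symm
  have hq' : (derivative q).eval 0 ^ 2 = (n : ℝ) ^ 2 / x i ^ 2 := by
    have hT' := eval_derivative_T_zero_sq_of_odd (R := ℝ) hoddℤ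
    rw [eval_derivative_of_isRoot_divByMonic_X_sub_C hroot hq] at hT'
    push_cast at hT'
    rw [eq_div_iff (pow_ne_zero 2 hr)]
    linear_combination hT'
  have hpoly : h i = fun t => (q ^ 2 * (C (1 / (n : ℝ) ^ 2) * (1 - C (x i) * X))).eval t := by
    funext t
    simp only [hh, eval_mul, eval_pow, eval_C, eval_sub, eval_one, eval_X]
    ring
  rw [hpoly, iteratedDeriv_eval]
  simp only [eval_iterate_derivative_two_sq_mul_of_isRoot hq, eval_mul, eval_C, eval_sub, eval_one,
    eval_X, mul_zero, sub_zero, hq']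
  have hn : (n : ℝ) ≠ 0 := by exact_mod_cast hodd.pos.ne'
  field_simp

/-- For odd `n ≥ 3` and the Chebyshev knots of the first kind
`x i = cos ((2i-1)π/(2n))`, `i = 1,…,n`, the Hermite–Fejér fundamental polynomial
`h i t = (1/n²) * ((Tₙ /ₘ (X - C (x i))).eval t)² * (1 - t * x i)` satisfies
`(h i)'' (0) = 2 / (x i)²` for every `i ≠ (n+1)/2`. -/
theorem hermiteFejer_chebyshev_secondDeriv_at_zero (n : ℕ) (hn : 3 ≤ n) (hodd : Odd n)
    (x : ℕ → ℝ)
    (hx : ∀ i, 1 ≤ i → i ≤ n → x i = Real.cos ((2 * (i : ℝ) - 1) * Real.pi / (2 * n)))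
    (h : ℕ → ℝ → ℝ)
    (hh : ∀ i t, h i t = (1 / (n : ℝ) ^ 2)
      * ((Polynomial.Chebyshev.T ℝ n /ₘ (X - C (x i))).eval t) ^ 2 * (1 - t * x i)) :
    ∀ i, 1 ≤ i → i ≤ n → i ≠ (n + 1) / 2 →
      iteratedDeriv 2 (h i) 0 = 2 / (x i) ^ 2 :=
  hermiteFejer_chebyshev_secondDeriv_at_zero_general n hodd x hx h hh
end

section
/- For every odd integer n ≥ 3, ∑_{k=1}^{(n−1)/2} 2/sin²(kπ/n) = (n² − 1)/3. -/
open Finset Real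

/-! For a nontrivial `n`-th root of unity `z = exp (2ix)` one has `(1 - z)² = -4z sin² x`, and
summation by parts gives `(1 - z)² ∑_{j<n} j(n - j) zʲ = 2nz`; hence
`1 / sin² x = -(2/n) ∑_{j<n} j(n - j) zʲ`. Summing over `z = ζᵏ`, `0 < k < n`, orthogonality of
the powers of a primitive root leaves `(2/n) ∑_{j<n} j(n - j) = (n² - 1)/3`. For odd `n` the
terms `k` and `n - k` pair up, so the half sum counted twice is the full sum. -/

theorem one_sub_mul_sum_range_mul_pow {R : Type*} [CommRing R] (f : ℕ → R) (z : R) (n : ℕ) :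
    (1 - z) * ∑ j ∈ range n, f j * z ^ j =
      f 0 - f n * z ^ n + z * ∑ j ∈ range n, (f (j + 1) - f j) * z ^ j := by
  induction n with
  | zero => simp
  | succ n ih => rw [sum_range_succ, sum_range_succ, mul_add, ih]; ring

section GeomSumEqZero

variable {R : Type*} [CommRing R] {z : R} {n : ℕ}

theorem pow_eq_one_of_geom_sum_eq_zero (hz : ∑ j ∈ range n, z ^ j = 0) : z ^ n = 1 := by
  have := mul_neg_geom_sum z n
  rw [hz, mul_zero] at this
  linear_combination this

theorem one_sub_mul_sum_range_natCast_mul_pow (hz : ∑ j ∈ range n, z ^ j = 0) :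
    (1 - z) * ∑ j ∈ range n, (j : R) * z ^ j = -n := by
  rw [one_sub_mul_sum_range_mul_pow, pow_eq_one_of_geom_sum_eq_zero hz]
  simp [hz]

theorem one_sub_sq_mul_sum_range_mul_sub_mul_pow (hz : ∑ j ∈ range n, z ^ j = 0) :
    (1 - z) ^ 2 * ∑ j ∈ range n, (j * (n - j) : R) * z ^ j = 2 * n * z := by
  have hfirst : (1 - z) * ∑ j ∈ range n, (j * (n - j) : R) * z ^ j =
      z * ∑ j ∈ range n, ((n - 1 : R) - 2 * j) * z ^ j := by
    rw [one_sub_mul_sum_range_mul_pow]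
    simp only [Nat.cast_zero, Nat.cast_succ, zero_mul, sub_self, mul_zero, sub_zero, zero_add]
    exact congrArg _ (sum_congr rfl fun j _ => by ring)
  have hsplit : ∑ j ∈ range n, ((n - 1 : R) - 2 * j) * z ^ j =
      (n - 1) * ∑ j ∈ range n, z ^ j - 2 * ∑ j ∈ range n, (j : R) * z ^ j := by
    simp only [sub_mul, sum_sub_distrib, mul_assoc, ← mul_sum]
  linear_combination (1 - z) * hfirst + (1 - z) * z * hsplit + (1 - z) * z * (n - 1) * hz -
    2 * z * one_sub_mul_sum_range_natCast_mul_pow hz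

end GeomSumEqZero

namespace Complex

theorem one_sub_exp_two_mul_I_sq (x : ℂ) :
    (1 - exp (2 * x * I)) ^ 2 = -4 * exp (2 * x * I) * sin x ^ 2 := by
  have h : exp (x * I) * exp (-x * I) = 1 := by
    rw [← exp_add]; simp
  rw [show 2 * x * I = x * I + x * I by ring, exp_add, sin]
  set e := exp (x * I)
  set f := exp (-x * I)
  linear_combination e ^ 2 * (f - e) ^ 2 * I_sq - (1 + e * f - 2 * e ^ 2) * h

theorem sin_sq_mul_sum_range_mul_sub_mul_exp_pow {x : ℂ} {n : ℕ}
    (hx : ∑ j ∈ range n, exp (2 * x * I) ^ j = 0) :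
    sin x ^ 2 * ∑ j ∈ range n, (j * (n - j) : ℂ) * exp (2 * x * I) ^ j = -n / 2 := by
  have h := one_sub_sq_mul_sum_range_mul_sub_mul_pow hx
  rw [one_sub_exp_two_mul_I_sq] at h
  apply mul_left_cancel₀ (exp_ne_zero (2 * x * I))
  linear_combination (-1 / 4 : ℂ) * h

end Complex

section PrimitiveRoot

variable {R : Type*} [CommRing R] [IsDomain R] {ζ : R} {n : ℕ}

theorem IsPrimitiveRoot.geom_sum_pow_eq_zero (hζ : IsPrimitiveRoot ζ n) {j : ℕ} (hj0 : j ≠ 0)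
    (hjn : j < n) : ∑ k ∈ range n, (ζ ^ j) ^ k = 0 := by
  have h := mul_neg_geom_sum (ζ ^ j) n
  rw [pow_right_comm, hζ.pow_eq_one, one_pow, sub_self] at h
  exact (mul_eq_zero.1 h).resolve_left (sub_ne_zero.2 (hζ.pow_ne_one_of_pos_of_lt hj0 hjn).symm)

theorem IsPrimitiveRoot.sum_Ico_sum_range_mul_pow (hζ : IsPrimitiveRoot ζ n) (c : ℕ → R)
    (hc : c 0 = 0) :
    ∑ k ∈ Ico 1 n, ∑ j ∈ range n, c j * (ζ ^ k) ^ j = -∑ j ∈ range n, c j := by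
  rw [sum_comm, ← sum_neg_distrib]
  refine sum_congr rfl fun j hj => ?_
  rcases eq_or_ne j 0 with rfl | hj0
  · simp [hc]
  · have h := hζ.geom_sum_pow_eq_zero hj0 (mem_range.1 hj)
    rw [sum_range_eq_add_Ico _ (Nat.zero_lt_of_lt (mem_range.1 hj))] at h
    simp only [pow_right_comm ζ _ j, ← mul_sum]
    linear_combination c j * h

end PrimitiveRoot

theorem sum_range_natCast_mul_sub {R : Type*} [CommRing R] (c : R) (m : ℕ) :
    6 * ∑ j ∈ range m, (j : R) * (c - j) = m * (m - 1) * (3 * c - 2 * m + 1) := by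
  induction m with
  | zero => simp
  | succ m ih => rw [sum_range_succ, mul_add, ih]; push_cast; ring

theorem Real.sum_Ico_inv_sin_sq {n : ℕ} (hn : n ≠ 0) :
    ∑ k ∈ Ico 1 n, (sin (k * π / n) ^ 2)⁻¹ = ((n : ℝ) ^ 2 - 1) / 3 := by
  have hζ := Complex.isPrimitiveRoot_exp n hn
  set ζ := Complex.exp (2 * π * Complex.I / n)
  have hterm : ∀ k ∈ Ico 1 n, (Complex.sin (k * π / n) ^ 2)⁻¹ =
      -(2 / n) * ∑ j ∈ range n, (j * (n - j) : ℂ) * (ζ ^ k) ^ j := by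
    intro k hk
    have hexp : Complex.exp (2 * (k * π / n) * Complex.I) = ζ ^ k := by
      rw [← Complex.exp_nat_mul]
      congr 1
      field_simp
    have h := Complex.sin_sq_mul_sum_range_mul_sub_mul_exp_pow (x := k * π / n) (n := n)
      (by rw [hexp]; exact hζ.geom_sum_pow_eq_zero (by grind) (by grind))
    rw [hexp] at h
    refine inv_eq_of_mul_eq_one_right ?_
    field_simp
    linear_combination -2 * h
  apply Complex.ofReal_injective
  push_cast
  rw [sum_congr rfl hterm, ← mul_sum, hζ.sum_Ico_sum_range_mul_pow _ (by simp)]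
  have h := sum_range_natCast_mul_sub (n : ℂ) n
  field_simp
  linear_combination h

theorem Real.sin_natSub_mul_pi_div {n k : ℕ} (hk : k ≤ n) :
    sin (((n - k : ℕ) : ℝ) * π / n) = sin (k * π / n) := by
  rcases eq_or_ne n 0 with rfl | hn
  · rw [Nat.le_zero.1 hk]
  · rw [Nat.cast_sub hk, sub_mul, sub_div, mul_div_cancel_left₀ _ (Nat.cast_ne_zero.2 hn),
      sin_pi_sub]

theorem sum_two_div_sin_sq_general (n : ℕ) (hodd : Odd n) :
    ∑ k ∈ Finset.Icc 1 ((n - 1) / 2),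
      2 / Real.sin ((k : ℝ) * Real.pi / n) ^ 2 = ((n : ℝ) ^ 2 - 1) / 3 := by
  obtain ⟨m, rfl⟩ := hodd
  set f : ℕ → ℝ := fun k => (sin (k * π / (2 * m + 1 : ℕ)) ^ 2)⁻¹
  calc ∑ k ∈ Icc 1 ((2 * m + 1 - 1) / 2), 2 / sin (k * π / (2 * m + 1 : ℕ)) ^ 2
      = ∑ k ∈ Ico 1 (m + 1), (f k + f (2 * m + 1 - k)) := by
        rw [show (2 * m + 1 - 1) / 2 = m by omega, ← Ico_add_one_right_eq_Icc]
        refine sum_congr rfl fun k hk => ?_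
        simp only [f, Real.sin_natSub_mul_pi_div (by grind : k ≤ 2 * m + 1)]
        ring
    _ = ∑ k ∈ Ico 1 (m + 1), f k + ∑ k ∈ Ico (m + 1) (2 * m + 1), f k := by
        rw [sum_add_distrib, sum_Ico_reflect _ _ (by omega), show 2 * m + 1 + 1 - (m + 1) = m + 1 by omega, Nat.add_sub_cancel]
    _ = ((2 * m + 1 : ℕ) ^ 2 - 1) / 3 := by
        rw [sum_Ico_consecutive _ (by omega) (by omega), Real.sum_Ico_inv_sin_sq (by omega)]

/-- For every odd `n ≥ 3`, `∑_{k=1}^{(n-1)/2} 2 / sin²(kπ/n) = (n² - 1)/3`. -/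
theorem sum_two_div_sin_sq (n : ℕ) (hn : 3 ≤ n) (hodd : Odd n) :
    ∑ k ∈ Finset.Icc 1 ((n - 1) / 2),
      2 / Real.sin ((k : ℝ) * Real.pi / n) ^ 2 = ((n : ℝ) ^ 2 - 1) / 3 :=
  sum_two_div_sin_sq_general n hodd
end
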